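/- arXiv:2110.15125 — 6 statements merged into one kernel-verified Lean document; each statement's English description precedes it below -/
import Mathlib

section
/- Let H be a finite-dimensional real inner product space, B a self-adjoint positive definite operator on H, and A an operator on H with ⟪A x, x⟫ ≥ 0 for all x. Suppose the sequence (yⁿ) in H satisfies B (yⁿ⁺¹ - yⁿ)/τ + A yⁿ⁺ᶿ = φⁿ with τ > 0, σ ≥ 1/2, yⁿ⁺ᶿ = σ yⁿ⁺¹ + (1-σ) yⁿ. Then ‖yⁿ⁺¹‖_B ≤ ‖yⁿ‖_B + τ ‖φⁿ‖_{B⁻¹} for every n. -/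
open scoped RealInnerProductSpace

/-!
With `‖x‖_B = √⟪B x, x⟫`, `δ = yⁿ⁺¹ - yⁿ` and `z = σ yⁿ⁺¹ + (1 - σ) yⁿ`, pairing the scheme with `z`
and dropping `τ ⟪A z, z⟫ ≥ 0` gives the energy inequality
`(‖yⁿ⁺¹‖_B² - ‖yⁿ‖_B²) / 2 + (σ - 1/2) ‖δ‖_B² = ⟪B δ, z⟫ ≤ τ ‖φⁿ‖_{B⁻¹} ‖z‖_B`,
and `z = (yⁿ⁺¹ + yⁿ) / 2 + (σ - 1/2) δ` bounds `‖z‖_B`. If `‖yⁿ⁺¹‖_B` exceeded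
`‖yⁿ‖_B + τ ‖φⁿ‖_{B⁻¹}`, the triangle inequality would force `‖δ‖_B > τ ‖φⁿ‖_{B⁻¹}`, and then the
`σ - 1/2` terms could not compensate the gap between the difference of squares and its bound.
-/

theorem le_add_of_sq_sub_sq_le {a b d s g : ℝ} (hb : 0 ≤ b) (hs : 0 ≤ s) (hg : 0 ≤ g)
    (had : a ≤ b + d) (h : (a ^ 2 - b ^ 2) / 2 + s * d ^ 2 ≤ g * ((a + b) / 2 + s * d)) :
    a ≤ b + g := by
  by_contra! hlt
  have hd : g < d := by linarith
  nlinarith [mul_pos (by linarith : 0 < a + b) (by linarith : 0 < a - b - g),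
    mul_nonneg (mul_nonneg hs (hg.trans hd.le)) (sub_nonneg.2 hd.le)]

namespace LinearMap

variable {H : Type*} [NormedAddCommGroup H] [InnerProductSpace ℝ H]

noncomputable def energyNorm (B : H →ₗ[ℝ] H) (x : H) : ℝ := √⟪B x, x⟫

theorem energyNorm_nonneg (B : H →ₗ[ℝ] H) (x : H) : 0 ≤ B.energyNorm x := Real.sqrt_nonneg _

theorem energyNorm_smul (B : H →ₗ[ℝ] H) (c : ℝ) (x : H) :
    B.energyNorm (c • x) = |c| * B.energyNorm x := by
  rw [energyNorm, energyNorm, map_smul, real_inner_smul_left, real_inner_smul_right, ← mul_assoc,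
    ← sq, Real.sqrt_mul (sq_nonneg c), Real.sqrt_sq_eq_abs]

namespace IsPositive

variable {B : H →ₗ[ℝ] H} (hB : B.IsPositive)
include hB

theorem energyNorm_sq (x : H) : B.energyNorm x ^ 2 = ⟪B x, x⟫ :=
  Real.sq_sqrt (hB.inner_nonneg_left x)

theorem inner_map_comm (x y : H) : ⟪B x, y⟫ = ⟪B y, x⟫ := by
  rw [hB.isSymmetric, real_inner_comm]

theorem inner_le_energyNorm_mul (x y : H) : ⟪B x, y⟫ ≤ B.energyNorm x * B.energyNorm y := by
  have hcs :=
    BilinForm.apply_mul_apply_le_of_forall_zero_le ((innerₗ H) ∘ₗ B) hB.inner_nonneg_left x y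
  simp only [coe_comp, Function.comp_apply, innerₗ_apply_apply, ← hB.inner_map_comm x y] at hcs
  calc ⟪B x, y⟫ ≤ |⟪B x, y⟫| := le_abs_self _
    _ ≤ √(⟪B x, x⟫ * ⟪B y, y⟫) := Real.abs_le_sqrt (by rwa [sq])
    _ = B.energyNorm x * B.energyNorm y := Real.sqrt_mul (hB.inner_nonneg_left x) _

theorem energyNorm_add_le (x y : H) : B.energyNorm (x + y) ≤ B.energyNorm x + B.energyNorm y := by
  have hxy := hB.inner_le_energyNorm_mul x y
  have hx := hB.energyNorm_sq x
  have hy := hB.energyNorm_sq y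
  have hsum : ⟪B (x + y), x + y⟫ = ⟪B x, x⟫ + 2 * ⟪B x, y⟫ + ⟪B y, y⟫ := by
    simp only [map_add, inner_add_left, inner_add_right, hB.inner_map_comm y x]
    ring
  rw [energyNorm, Real.sqrt_le_left (add_nonneg (B.energyNorm_nonneg x) (B.energyNorm_nonneg y))]
  nlinarith

theorem inner_le_sqrt_inner_mul_energyNorm {w φ : H} (hw : B w = φ) (z : H) :
    ⟪φ, z⟫ ≤ √⟪w, φ⟫ * B.energyNorm z := by
  have hwφ : B.energyNorm w = √⟪w, φ⟫ := by rw [energyNorm, hw, real_inner_comm]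
  rw [← hwφ, ← hw]
  exact hB.inner_le_energyNorm_mul w z

theorem inner_map_sub_weighted_eq (σ : ℝ) (v u : H) :
    ⟪B (v - u), σ • v + (1 - σ) • u⟫ =
      (B.energyNorm v ^ 2 - B.energyNorm u ^ 2) / 2 + (σ - 1 / 2) * B.energyNorm (v - u) ^ 2 := by
  simp only [hB.energyNorm_sq, map_sub, inner_sub_left, inner_add_right, inner_sub_right,
    real_inner_smul_right, hB.inner_map_comm u v]
  ring

theorem energyNorm_weighted_le {σ : ℝ} (hσ : 1 / 2 ≤ σ) (v u : H) :
    B.energyNorm (σ • v + (1 - σ) • u) ≤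
      (B.energyNorm v + B.energyNorm u) / 2 + (σ - 1 / 2) * B.energyNorm (v - u) := by
  have hsplit : σ • v + (1 - σ) • u = (2⁻¹ : ℝ) • (v + u) + (σ - 1 / 2) • (v - u) := by module
  calc B.energyNorm (σ • v + (1 - σ) • u)
      ≤ B.energyNorm ((2⁻¹ : ℝ) • (v + u)) + B.energyNorm ((σ - 1 / 2) • (v - u)) := by
        rw [hsplit]; exact hB.energyNorm_add_le _ _
    _ = 2⁻¹ * B.energyNorm (v + u) + (σ - 1 / 2) * B.energyNorm (v - u) := by
        rw [energyNorm_smul, energyNorm_smul, abs_of_pos (by norm_num),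
          abs_of_nonneg (by linarith)]
    _ ≤ (B.energyNorm v + B.energyNorm u) / 2 + (σ - 1 / 2) * B.energyNorm (v - u) := by
        linarith [hB.energyNorm_add_le v u]

end IsPositive
end LinearMap

theorem stmt_4_general {H : Type*} [NormedAddCommGroup H] [InnerProductSpace ℝ H]
    (B Binv A : H →ₗ[ℝ] H)
    (hB_sym : ∀ x y : H, ⟪B x, y⟫ = ⟪x, B y⟫)
    (hB_pos : ∀ x : H, x ≠ 0 → 0 < ⟪B x, x⟫)
    (hBinv : ∀ x : H, Binv (B x) = x ∧ B (Binv x) = x)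
    (hA_nonneg : ∀ x : H, 0 ≤ ⟪A x, x⟫)
    (τ σ : ℝ) (hτ : 0 < τ) (hσ : 1 / 2 ≤ σ)
    (y φ : ℕ → H)
    (hscheme : ∀ n : ℕ,
      τ⁻¹ • B (y (n + 1) - y n) + A (σ • y (n + 1) + (1 - σ) • y n) = φ n) :
    ∀ n : ℕ,
      Real.sqrt ⟪B (y (n + 1)), y (n + 1)⟫
        ≤ Real.sqrt ⟪B (y n), y n⟫ + τ * Real.sqrt ⟪Binv (φ n), φ n⟫ := by
  have hB : B.IsPositive := B.isPositive_iff.2 ⟨hB_sym, fun x => by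
    rcases eq_or_ne x 0 with rfl | hx
    · simp
    · exact (hB_pos x hx).le⟩
  intro n
  set u := y n
  set v := y (n + 1)
  set z := σ • v + (1 - σ) • u
  set f := √⟪Binv (φ n), φ n⟫
  have hdiff : B (v - u) = τ • (φ n - A z) := by
    rw [← hscheme n, add_sub_cancel_right, smul_inv_smul₀ hτ.ne']
  have henergy : ⟪B (v - u), z⟫ ≤ τ * f * B.energyNorm z := by
    calc ⟪B (v - u), z⟫ = τ * (⟪φ n, z⟫ - ⟪A z, z⟫) := by
          rw [hdiff, real_inner_smul_left, inner_sub_left]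
      _ ≤ τ * ⟪φ n, z⟫ := mul_le_mul_of_nonneg_left (by linarith [hA_nonneg z]) hτ.le
      _ ≤ τ * f * B.energyNorm z := by
          rw [mul_assoc]
          exact mul_le_mul_of_nonneg_left
            (hB.inner_le_sqrt_inner_mul_energyNorm (hBinv _).2 z) hτ.le
  show B.energyNorm v ≤ B.energyNorm u + τ * f
  refine le_add_of_sq_sub_sq_le (d := B.energyNorm (v - u)) (B.energyNorm_nonneg u)
    (sub_nonneg.2 hσ) (mul_nonneg hτ.le (Real.sqrt_nonneg _)) ?_ ?_
  · simpa only [add_sub_cancel] using hB.energyNorm_add_le u (v - u)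
  · calc _ = ⟪B (v - u), z⟫ := (hB.inner_map_sub_weighted_eq σ v u).symm
      _ ≤ τ * f * B.energyNorm z := henergy
      _ ≤ _ := by
          gcongr
          exact hB.energyNorm_weighted_le hσ v u

theorem stmt_4 {H : Type*} [NormedAddCommGroup H] [InnerProductSpace ℝ H]
    [FiniteDimensional ℝ H]
    (B Binv A : H →ₗ[ℝ] H)
    (hB_sym : ∀ x y : H, ⟪B x, y⟫ = ⟪x, B y⟫)
    (hB_pos : ∀ x : H, x ≠ 0 → 0 < ⟪B x, x⟫)
    (hBinv : ∀ x : H, Binv (B x) = x ∧ B (Binv x) = x)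
    (hA_nonneg : ∀ x : H, 0 ≤ ⟪A x, x⟫)
    (τ σ : ℝ) (hτ : 0 < τ) (hσ : 1 / 2 ≤ σ)
    (y φ : ℕ → H)
    (hscheme : ∀ n : ℕ,
      τ⁻¹ • B (y (n + 1) - y n) + A (σ • y (n + 1) + (1 - σ) • y n) = φ n) :
    ∀ n : ℕ,
      Real.sqrt ⟪B (y (n + 1)), y (n + 1)⟫
        ≤ Real.sqrt ⟪B (y n), y n⟫ + τ * Real.sqrt ⟪Binv (φ n), φ n⟫ :=
  stmt_4_general B Binv A hB_sym hB_pos hBinv hA_nonneg τ σ hτ hσ y φ hscheme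
end

section
/- Let H be a finite-dimensional real inner product space and A : H → H a linear operator. On the direct sum 𝐇 = H^{m+1}, define the block operator 𝐀 acting on (v, v₁, …, v_m) by first component Σ_i a_i A v_i and i-th component a_i b_i A v_i − a_i A v, where a_i > 0, b_i ≥ 0. If A is self-adjoint and positive semidefinite, then ⟪𝐀 𝐯, 𝐯⟫ ≥ 0 for all 𝐯 ∈ 𝐇. -/
open scoped RealInnerProductSpace BigOperators

/-! The off-diagonal blocks `a_i A` and `-a_i A` of `𝐀` are negatives of each other's adjoints,
so for symmetric `A` they cancel in the quadratic form `⟪𝐀 𝐯, 𝐯⟫`, leaving only the diagonal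
contribution `Σ_i a_i b_i ⟪A v_i, v_i⟫ ≥ 0`. -/

namespace LinearMap.IsSymmetric

variable {H : Type*} [NormedAddCommGroup H] [InnerProductSpace ℝ H] {A : H →ₗ[ℝ] H}

theorem inner_smul_add_inner_sub_smul (hA : A.IsSymmetric) (c d : ℝ) (v w : H) :
    ⟪c • A w, v⟫ + ⟪d • A w - c • A v, w⟫ = d * ⟪A w, w⟫ := by
  have hcross : ⟪A v, w⟫ = ⟪A w, v⟫ := by rw [hA, real_inner_comm]
  rw [inner_sub_left, real_inner_smul_left, real_inner_smul_left, real_inner_smul_left, hcross]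
  ring

theorem inner_blockOperator_eq {ι : Type*} [Fintype ι] (hA : A.IsSymmetric) (a b : ι → ℝ)
    (v : H) (w : ι → H) :
    ⟪∑ i, a i • A (w i), v⟫ + ∑ i, ⟪(a i * b i) • A (w i) - a i • A v, w i⟫
      = ∑ i, (a i * b i) * ⟪A (w i), w i⟫ := by
  rw [sum_inner, ← Finset.sum_add_distrib]
  exact Finset.sum_congr rfl fun i _ => hA.inner_smul_add_inner_sub_smul _ _ v (w i)

end LinearMap.IsSymmetric

theorem stmt_6_general {H : Type*} [NormedAddCommGroup H] [InnerProductSpace ℝ H]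
    (m : ℕ) (A : H →ₗ[ℝ] H)
    (hA_sym : ∀ x y : H, ⟪A x, y⟫ = ⟪x, A y⟫)
    (hA_nonneg : ∀ x : H, 0 ≤ ⟪A x, x⟫)
    (a b : Fin m → ℝ) (ha : ∀ i, 0 < a i) (hb : ∀ i, 0 ≤ b i) :
    ∀ (v : H) (w : Fin m → H),
      0 ≤ ⟪∑ i, a i • A (w i), v⟫
          + ∑ i, ⟪(a i * b i) • A (w i) - a i • A v, w i⟫ := by
  intro v w
  rw [LinearMap.IsSymmetric.inner_blockOperator_eq hA_sym]
  exact Finset.sum_nonneg fun i _ =>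
    mul_nonneg (mul_nonneg (ha i).le (hb i)) (hA_nonneg (w i))

/-- Positivity of the block operator 𝐀: for 𝐯 = (v, v₁, …, v_m),
`⟪𝐀 𝐯, 𝐯⟫ = ⟪Σ_i a_i A v_i, v⟫ + Σ_i ⟪a_i b_i A v_i − a_i A v, v_i⟫ ≥ 0`. -/
theorem stmt_6 {H : Type*} [NormedAddCommGroup H] [InnerProductSpace ℝ H]
    [FiniteDimensional ℝ H]
    (m : ℕ) (hm : 1 ≤ m) (A : H →ₗ[ℝ] H)
    (hA_sym : ∀ x y : H, ⟪A x, y⟫ = ⟪x, A y⟫)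
    (hA_nonneg : ∀ x : H, 0 ≤ ⟪A x, x⟫)
    (a b : Fin m → ℝ) (ha : ∀ i, 0 < a i) (hb : ∀ i, 0 ≤ b i) :
    ∀ (v : H) (w : Fin m → H),
      0 ≤ ⟪∑ i, a i • A (w i), v⟫
          + ∑ i, ⟪(a i * b i) • A (w i) - a i • A v, w i⟫ :=
  stmt_6_general m A hA_sym hA_nonneg a b ha hb
end

section
/- Let u : [0,∞) → H be continuously differentiable into a finite-dimensional real inner product space H, with du/dt(t) = φ(t) − a₁ A u₁(t) and du₁/dt(t) = u(t) − b₁ u₁(t), u(0) = u₀, u₁(0) = 0, where A is symmetric positive semidefinite and a₁ > 0, b₁ ≥ 0. Then for all t ≥ 0: (‖u(t)‖² + a₁ ‖u₁(t)‖_A²)^{1/2} ≤ ‖u₀‖ + ∫_0^t ‖φ(s)‖ ds. -/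
/-!
The energy `E = ‖u‖² + a₁ ⟪A u₁, u₁⟫` satisfies `E' = 2 ⟪u, φ⟫ - 2 a₁ b₁ ⟪A u₁, u₁⟫`: the coupling
terms `∓ 2 a₁ ⟪A u₁, u⟫` coming from the two equations cancel by the symmetry of `A`. Since
`‖u‖ ≤ √E`, this gives `E' ≤ 2 ‖φ‖ √E`, i.e. formally `(√E)' ≤ ‖φ‖`, which integrates to the claim.
To avoid differentiating `√` at `0`, one compares `√(E + ε²)` with its integral bound and lets
`ε → 0`.
-/

open Set
open scoped RealInnerProductSpace

theorem sqrt_le_sqrt_add_integral_of_hasDerivWithinAt {E E' g : ℝ → ℝ} {a b : ℝ} (hab : a ≤ b)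
    (hE : ContinuousOn E (Icc a b)) (hE' : ∀ s ∈ Ico a b, HasDerivWithinAt E (E' s) (Ici s) s)
    (hE_nonneg : ∀ s ∈ Icc a b, 0 ≤ E s) (hg : Continuous g) (hg_nonneg : ∀ s ∈ Ico a b, 0 ≤ g s)
    (hbound : ∀ s ∈ Ico a b, E' s ≤ 2 * g s * √(E s)) :
    √(E b) ≤ √(E a) + ∫ s in a..b, g s := by
  refine le_of_forall_pos_le_add fun ε hε => ?_
  have hpos : ∀ s ∈ Icc a b, 0 < E s + ε ^ 2 := fun s hs => by
    have := hE_nonneg s hs; positivity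
  have hprimitive : ∀ s, HasDerivAt (fun r => √(E a + ε ^ 2) + ∫ x in a..r, g x) (g s) s :=
    fun s => (hg.integral_hasStrictDerivAt a s).hasDerivAt.const_add _
  have hderiv_le : ∀ s ∈ Ico a b, E' s / (2 * √(E s + ε ^ 2)) ≤ g s := fun s hs => by
    have hsqrt := Real.sqrt_pos.2 (hpos s (Ico_subset_Icc_self hs))
    rw [div_le_iff₀ (by positivity)]
    calc E' s ≤ 2 * g s * √(E s) := hbound s hs
      _ ≤ 2 * g s * √(E s + ε ^ 2) := by
        gcongr
        · linarith [hg_nonneg s hs]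
        · linarith [sq_nonneg ε]
      _ = g s * (2 * √(E s + ε ^ 2)) := by ring
  have hcompare := image_le_of_deriv_right_le_deriv_boundary (f := fun s => √(E s + ε ^ 2))
    (hE.add continuousOn_const).sqrt
    (fun s hs => ((hE' s hs).add_const _).sqrt (hpos s (Ico_subset_Icc_self hs)).ne')
    (by simp) (fun s _ => (hprimitive s).continuousAt.continuousWithinAt)
    (fun s _ => (hprimitive s).hasDerivWithinAt) hderiv_le (right_mem_Icc.2 hab)
  have hb : √(E b) ≤ √(E b + ε ^ 2) := Real.sqrt_le_sqrt (by linarith [sq_nonneg ε])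
  have ha : √(E a + ε ^ 2) ≤ √(E a) + ε := by
    have hEa := Real.sq_sqrt (hE_nonneg a (left_mem_Icc.2 hab))
    exact Real.sqrt_le_iff.2 ⟨by positivity, by nlinarith [Real.sqrt_nonneg (E a)]⟩
  linarith

section Energy

variable {H : Type*} [NormedAddCommGroup H] [InnerProductSpace ℝ H] [CompleteSpace H]
  {A : H →ₗ[ℝ] H}

theorem HasDerivAt.inner_apply_self (hA : A.IsSymmetric) {f : ℝ → H} {f' : H} {t : ℝ}
    (hf : HasDerivAt f f' t) :
    HasDerivAt (fun s => ⟪A (f s), f s⟫) (2 * ⟪A (f t), f'⟫) t := by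
  have hAf : HasDerivAt (fun s => A (f s)) (A f') t :=
    (⟨A, hA.continuous⟩ : H →L[ℝ] H).hasFDerivAt.comp_hasDerivAt t hf
  refine (hAf.inner ℝ hf).congr_deriv ?_
  rw [hA, real_inner_comm]
  ring

theorem hasDerivAt_energy (hA : A.IsSymmetric) {a b : ℝ} {u u₁ : ℝ → H} {f : H} {t : ℝ}
    (hu : HasDerivAt u (f - a • A (u₁ t)) t) (hu₁ : HasDerivAt u₁ (u t - b • u₁ t) t) :
    HasDerivAt (fun s => ‖u s‖ ^ 2 + a * ⟪A (u₁ s), u₁ s⟫)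
      (2 * ⟪u t, f⟫ - 2 * a * b * ⟪A (u₁ t), u₁ t⟫) t := by
  refine (hu.norm_sq.add ((hu₁.inner_apply_self hA).const_mul a)).congr_deriv ?_
  simp only [inner_sub_right, real_inner_smul_right, real_inner_comm (u t) (A (u₁ t))]
  ring

end Energy

theorem stmt_8 {H : Type*} [NormedAddCommGroup H] [InnerProductSpace ℝ H]
    [FiniteDimensional ℝ H]
    (A : H →ₗ[ℝ] H)
    (hA_sym : ∀ x y : H, ⟪A x, y⟫ = ⟪x, A y⟫)
    (hA_nonneg : ∀ x : H, 0 ≤ ⟪A x, x⟫)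
    (a₁ b₁ : ℝ) (ha₁ : 0 < a₁) (hb₁ : 0 ≤ b₁)
    (u u₁ φ : ℝ → H) (u₀ : H) (hφ : Continuous φ)
    (hu : ∀ t, 0 ≤ t → HasDerivAt u (φ t - a₁ • A (u₁ t)) t)
    (hu₁ : ∀ t, 0 ≤ t → HasDerivAt u₁ (u t - b₁ • u₁ t) t)
    (hu0 : u 0 = u₀) (hu₁0 : u₁ 0 = 0) :
    ∀ t, 0 ≤ t →
      Real.sqrt (‖u t‖ ^ 2 + a₁ * ⟪A (u₁ t), u₁ t⟫)
        ≤ ‖u₀‖ + ∫ s in (0 : ℝ)..t, ‖φ s‖ := by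
  intro t ht
  have hq : ∀ s, 0 ≤ a₁ * ⟪A (u₁ s), u₁ s⟫ := fun s => mul_nonneg ha₁.le (hA_nonneg _)
  have hE : ∀ s, 0 ≤ s → HasDerivAt (fun r => ‖u r‖ ^ 2 + a₁ * ⟪A (u₁ r), u₁ r⟫)
      (2 * ⟪u s, φ s⟫ - 2 * a₁ * b₁ * ⟪A (u₁ s), u₁ s⟫) s :=
    fun s hs => hasDerivAt_energy hA_sym (hu s hs) (hu₁ s hs)
  have hbound : ∀ s, 2 * ⟪u s, φ s⟫ - 2 * a₁ * b₁ * ⟪A (u₁ s), u₁ s⟫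
      ≤ 2 * ‖φ s‖ * √(‖u s‖ ^ 2 + a₁ * ⟪A (u₁ s), u₁ s⟫) := fun s => by
    have hu_le : ‖u s‖ ≤ √(‖u s‖ ^ 2 + a₁ * ⟪A (u₁ s), u₁ s⟫) :=
      Real.le_sqrt_of_sq_le (by linarith [hq s])
    have := real_inner_le_norm (u s) (φ s)
    nlinarith [norm_nonneg (φ s), mul_nonneg hb₁ (hq s)]
  simpa [hu0, hu₁0] using sqrt_le_sqrt_add_integral_of_hasDerivWithinAt ht
    (fun s hs => (hE s hs.1).continuousAt.continuousWithinAt)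
    (fun s hs => (hE s hs.1).hasDerivWithinAt) (fun s _ => by linarith [hq s, sq_nonneg ‖u s‖])
    hφ.norm (fun s _ => norm_nonneg _) (fun s _ => hbound s)
end

section
/- Let H be a finite-dimensional real inner product space, A symmetric positive semidefinite, a_i > 0, b_i ≥ 0 for i = 1,…,m. Suppose (v, v₁, …, v_m) is a C¹ solution of dv/dt + Σ_i a_i A v_i = φ(t), dv_i/dt + b_i v_i − v = 0, with v(0) = u₀ and v_i(0) = 0. Then (‖v(t)‖² + Σ_i a_i ‖v_i(t)‖_A²)^{1/2} ≤ ‖u₀‖ + ∫_0^t ‖φ(s)‖ ds for all t ≥ 0. -/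
open scoped RealInnerProductSpace BigOperators

/-!
The energy `E = ‖v‖² + ∑ aᵢ ⟪A vᵢ, vᵢ⟫` satisfies `E' = 2⟪v, φ⟫ - 2 ∑ aᵢ bᵢ ⟪A vᵢ, vᵢ⟫`: by the
symmetry of `A` the coupling terms `aᵢ ⟪v, A vᵢ⟫` cancel. Dropping the dissipative sum and using
Cauchy–Schwarz with `‖v‖ ≤ √E` gives `E' ≤ 2 ‖φ‖ √E`, i.e. `(√E)' ≤ ‖φ‖`, which integrates to the
estimate.
-/

lemma Real.sqrt_add_sq_le {x : ℝ} (hx : 0 ≤ x) {δ : ℝ} (hδ : 0 ≤ δ) :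
    √(x + δ ^ 2) ≤ √x + δ :=
  Real.sqrt_le_iff.mpr ⟨by positivity, by nlinarith [Real.sq_sqrt hx, Real.sqrt_nonneg x]⟩

theorem Real.sqrt_le_sqrt_add_integral_of_deriv_le {E E' f : ℝ → ℝ} {a : ℝ}
    (hf : Continuous f) (hf_nonneg : ∀ t, a ≤ t → 0 ≤ f t)
    (hE_nonneg : ∀ t, a ≤ t → 0 ≤ E t) (hE : ∀ t, a ≤ t → HasDerivAt E (E' t) t)
    (hE' : ∀ t, a ≤ t → E' t ≤ 2 * f t * √(E t)) {t : ℝ} (ht : a ≤ t) :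
    √(E t) ≤ √(E a) + ∫ s in a..t, f s := by
  refine le_of_forall_pos_le_add fun δ hδ => ?_
  -- `√(E + δ²)` is differentiable even where `E` vanishes.
  set g : ℝ → ℝ := fun s => √(E s + δ ^ 2) - ∫ r in a..s, f r
  have hg : ∀ s, a ≤ s →
      HasDerivAt g (E' s / (2 * √(E s + δ ^ 2)) - f s) s := fun s hs =>
    (((hE s hs).add_const _).sqrt (by linarith [hE_nonneg s hs, pow_pos hδ 2])).sub
      (hf.integral_hasStrictDerivAt a s).hasDerivAt
  have hg' : ∀ s, a ≤ s → E' s / (2 * √(E s + δ ^ 2)) ≤ f s := fun s hs => by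
    have hpos : 0 < √(E s + δ ^ 2) :=
      Real.sqrt_pos.mpr (by linarith [hE_nonneg s hs, pow_pos hδ 2])
    rw [div_le_iff₀ (by positivity)]
    calc E' s ≤ 2 * f s * √(E s) := hE' s hs
      _ ≤ 2 * f s * √(E s + δ ^ 2) := by
        gcongr
        · linarith [hf_nonneg s hs]
        · linarith [pow_pos hδ 2]
      _ = f s * (2 * √(E s + δ ^ 2)) := by ring
  have hanti : AntitoneOn g (Set.Ici a) := by
    refine antitoneOn_of_deriv_nonpos (convex_Ici a)
      (fun s hs => (hg s hs).continuousAt.continuousWithinAt) ?_ ?_ <;>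
      intro s hs <;> rw [interior_Ici] at hs
    · exact (hg s hs.le).differentiableAt.differentiableWithinAt
    · rw [(hg s hs.le).deriv]
      linarith [hg' s hs.le]
  have hgt : g t ≤ g a := hanti Set.self_mem_Ici ht ht
  simp only [g, intervalIntegral.integral_same, sub_zero] at hgt
  calc √(E t) ≤ √(E t + δ ^ 2) := Real.sqrt_le_sqrt (by linarith [pow_pos hδ 2])
    _ ≤ √(E a + δ ^ 2) + ∫ s in a..t, f s := by linarith
    _ ≤ √(E a) + δ + ∫ s in a..t, f s := by
        gcongr; exact Real.sqrt_add_sq_le (hE_nonneg a le_rfl) hδ.le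
    _ = _ := by ring

section Energy

variable {H : Type*} [NormedAddCommGroup H] [InnerProductSpace ℝ H]

theorem HasDerivAt.inner_map_self {A : H →L[ℝ] H} (hA : (A : H →ₗ[ℝ] H).IsSymmetric)
    {w : ℝ → H} {w' : H} {t : ℝ} (hw : HasDerivAt w w' t) :
    HasDerivAt (fun s => ⟪A (w s), w s⟫) (2 * ⟪A (w t), w'⟫) t := by
  refine ((A.hasFDerivAt.comp_hasDerivAt t hw).inner ℝ hw).congr_deriv ?_
  have hsymm : ⟪A w', w t⟫ = ⟪A (w t), w'⟫ := by
    rw [real_inner_comm]; exact (hA (w t) w').symm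
  simp only [Function.comp_apply, hsymm]
  ring

variable {ι : Type*} [Fintype ι]

def energy (A : H →ₗ[ℝ] H) (a : ι → ℝ) (v : H) (w : ι → H) : ℝ :=
  ‖v‖ ^ 2 + ∑ i, a i * ⟪A (w i), w i⟫

variable {A : H →ₗ[ℝ] H} {a b : ι → ℝ}

lemma norm_le_sqrt_energy (hA : ∀ x, 0 ≤ ⟪A x, x⟫) (ha : ∀ i, 0 ≤ a i) (v : H) (w : ι → H) :
    ‖v‖ ≤ √(energy A a v w) :=
  Real.le_sqrt_of_sq_le <| le_add_of_nonneg_right <|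
    Finset.sum_nonneg fun i _ => mul_nonneg (ha i) (hA _)

lemma energy_nonneg (hA : ∀ x, 0 ≤ ⟪A x, x⟫) (ha : ∀ i, 0 ≤ a i) (v : H) (w : ι → H) :
    0 ≤ energy A a v w :=
  add_nonneg (sq_nonneg _) <| Finset.sum_nonneg fun i _ => mul_nonneg (ha i) (hA _)

theorem hasDerivAt_energy_s9 [FiniteDimensional ℝ H] (hA : A.IsSymmetric)
    {v φ : ℝ → H} {w : ι → ℝ → H} {t : ℝ}
    (hv : HasDerivAt v (φ t - ∑ i, a i • A (w i t)) t)
    (hw : ∀ i, HasDerivAt (w i) (v t - b i • w i t) t) :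
    HasDerivAt (fun s => energy A a (v s) (fun i => w i s))
      (2 * ⟪v t, φ t⟫ - 2 * ∑ i, a i * b i * ⟪A (w i t), w i t⟫) t := by
  have hquad : ∀ i, HasDerivAt (fun s => a i * ⟪A (w i s), w i s⟫)
      (a i * (2 * ⟪A (w i t), v t - b i • w i t⟫)) t := fun i =>
    ((hw i).inner_map_self (A := LinearMap.toContinuousLinearMap A) hA).const_mul (a i)
  refine (hv.norm_sq.add (HasDerivAt.fun_sum fun i _ => hquad i)).congr_deriv ?_
  have hsplit : ∑ i, a i * (2 * ⟪A (w i t), v t - b i • w i t⟫) =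
      2 * ∑ i, a i * ⟪v t, A (w i t)⟫ - 2 * ∑ i, a i * b i * ⟪A (w i t), w i t⟫ := by
    rw [Finset.mul_sum, Finset.mul_sum, ← Finset.sum_sub_distrib]
    refine Finset.sum_congr rfl fun i _ => ?_
    rw [inner_sub_right, real_inner_smul_right, real_inner_comm (v t)]
    ring
  rw [hsplit, inner_sub_right, inner_sum]
  simp only [real_inner_smul_right]
  ring

lemma energy_deriv_le (hA : ∀ x, 0 ≤ ⟪A x, x⟫) (ha : ∀ i, 0 ≤ a i) (hb : ∀ i, 0 ≤ b i)
    (φ v : H) (w : ι → H) :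
    2 * ⟪v, φ⟫ - 2 * ∑ i, a i * b i * ⟪A (w i), w i⟫ ≤ 2 * ‖φ‖ * √(energy A a v w) := by
  have hdiss : 0 ≤ ∑ i, a i * b i * ⟪A (w i), w i⟫ :=
    Finset.sum_nonneg fun i _ => mul_nonneg (mul_nonneg (ha i) (hb i)) (hA _)
  have hcs : ⟪v, φ⟫ ≤ √(energy A a v w) * ‖φ‖ :=
    calc ⟪v, φ⟫ ≤ ‖v‖ * ‖φ‖ := real_inner_le_norm v φ
      _ ≤ √(energy A a v w) * ‖φ‖ := by gcongr; exact norm_le_sqrt_energy hA ha v w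
  linarith

end Energy

theorem stmt_9_general {H : Type*} [NormedAddCommGroup H] [InnerProductSpace ℝ H]
    [FiniteDimensional ℝ H]
    (m : ℕ) (A : H →ₗ[ℝ] H)
    (hA_sym : ∀ x y : H, ⟪A x, y⟫ = ⟪x, A y⟫)
    (hA_nonneg : ∀ x : H, 0 ≤ ⟪A x, x⟫)
    (a b : Fin m → ℝ) (ha : ∀ i, 0 < a i) (hb : ∀ i, 0 ≤ b i)
    (v : ℝ → H) (vi : Fin m → ℝ → H) (φ : ℝ → H) (u₀ : H) (hφ : Continuous φ)
    (hv : ∀ t, 0 ≤ t → HasDerivAt v (φ t - ∑ i, a i • A (vi i t)) t)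
    (hvi : ∀ i, ∀ t, 0 ≤ t → HasDerivAt (vi i) (v t - b i • vi i t) t)
    (hv0 : v 0 = u₀) (hvi0 : ∀ i, vi i 0 = 0) :
    ∀ t, 0 ≤ t →
      Real.sqrt (‖v t‖ ^ 2 + ∑ i, a i * ⟪A (vi i t), vi i t⟫)
        ≤ ‖u₀‖ + ∫ s in (0 : ℝ)..t, ‖φ s‖ := by
  intro t ht
  have ha' : ∀ i, 0 ≤ a i := fun i => (ha i).le
  have h := Real.sqrt_le_sqrt_add_integral_of_deriv_le (E := fun s => energy A a (v s) (vi · s))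
    hφ.norm (fun s _ => norm_nonneg (φ s)) (fun s _ => energy_nonneg hA_nonneg ha' _ _)
    (fun s hs => hasDerivAt_energy_s9 hA_sym (hv s hs) (fun i => hvi i s hs))
    (fun s _ => energy_deriv_le hA_nonneg ha' hb _ _ _) ht
  simpa [energy, hv0, hvi0] using h

theorem stmt_9 {H : Type*} [NormedAddCommGroup H] [InnerProductSpace ℝ H]
    [FiniteDimensional ℝ H]
    (m : ℕ) (hm : 1 ≤ m) (A : H →ₗ[ℝ] H)
    (hA_sym : ∀ x y : H, ⟪A x, y⟫ = ⟪x, A y⟫)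
    (hA_nonneg : ∀ x : H, 0 ≤ ⟪A x, x⟫)
    (a b : Fin m → ℝ) (ha : ∀ i, 0 < a i) (hb : ∀ i, 0 ≤ b i)
    (v : ℝ → H) (vi : Fin m → ℝ → H) (φ : ℝ → H) (u₀ : H) (hφ : Continuous φ)
    (hv : ∀ t, 0 ≤ t → HasDerivAt v (φ t - ∑ i, a i • A (vi i t)) t)
    (hvi : ∀ i, ∀ t, 0 ≤ t → HasDerivAt (vi i) (v t - b i • vi i t) t)
    (hv0 : v 0 = u₀) (hvi0 : ∀ i, vi i 0 = 0) :
    ∀ t, 0 ≤ t →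
      Real.sqrt (‖v t‖ ^ 2 + ∑ i, a i * ⟪A (vi i t), vi i t⟫)
        ≤ ‖u₀‖ + ∫ s in (0 : ℝ)..t, ‖φ s‖ :=
  stmt_9_general m A hA_sym hA_nonneg a b ha hb v vi φ u₀ hφ hv hvi hv0 hvi0
end

section
/- Suppose k is C² on (0,∞) with k(t) ≥ 0, k'(t) ≤ 0, and k''(t) ≥ 0 for all t > 0, and k is continuous on [0,∞). Then k is of positive type: for every T > 0 and every continuous ψ : [0,T] → ℝ, ∫_0^T ψ(t) ∫_0^t k(t−s) ψ(s) ds dt ≥ 0. -/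
/-!
Twice the Volterra form `∫₀ᵀ ψ(t) ∫₀ᵗ k(t - s) ψ(s) ds dt` is the symmetric form
`∫∫_{[0,T]²} k(|t - s|) ψ(t) ψ(s) ds dt`, so it suffices that `x ↦ k(|x|)` be a positive
semidefinite kernel on `[-T, T]`. For `g` of class `C²` on `[0, T]` and `|x| ≤ T`, Taylor's
formula at `T` reads `g(|x|) = g(T) + (-g'(T)) (T - |x|)₊ + ∫₀ᵀ g''(σ) (σ - |x|)₊ dσ`; when
`g(T) ≥ 0`, `g'(T) ≤ 0` and `g'' ≥ 0` this is a nonnegative combination of a constant and of tents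
`(σ - |x|)₊`. Both are positive semidefinite, a tent being an autocorrelation:
`(σ - |t - s|)₊ = ∫ 1_{[t-σ,t]}(u) 1_{[s-σ,s]}(u) du`. Since `k''` may blow up at `0`, this is
applied to `g = k(· + ε)`, and then `ε → 0`.
-/

open MeasureTheory Set Filter Topology

section Fubini

variable {α β : Type*} [MeasurableSpace α] [MeasurableSpace β] {μ : Measure α} {ν : Measure β}
  [SFinite μ] [SFinite ν]

theorem integral_integral_nonneg_of_ae {f : α → β → ℝ}
    (hf : Integrable (Function.uncurry f) (μ.prod ν)) (h : ∀ᵐ y ∂ν, 0 ≤ ∫ x, f x y ∂μ) :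
    0 ≤ ∫ x, ∫ y, f x y ∂ν ∂μ := by
  rw [integral_integral_swap hf]
  exact integral_nonneg_of_ae h

end Fubini

theorem volume_diagonal_real : volume (diagonal ℝ) = 0 := by
  rw [Measure.volume_eq_prod, Measure.measure_prod_null measurableSet_diagonal]
  filter_upwards with x
  simp [preimage, diagonal]

theorem setIntegral_Icc_prod_Icc_eq_two_mul {T : ℝ} (hT : 0 ≤ T) {F : ℝ × ℝ → ℝ}
    (hF : IntegrableOn F (Icc 0 T ×ˢ Icc 0 T)) (hsymm : ∀ p, F p.swap = F p) :
    ∫ p in Icc 0 T ×ˢ Icc 0 T, F p = 2 * ∫ t in 0..T, ∫ s in 0..t, F (t, s) := by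
  set S := Icc (0 : ℝ) T ×ˢ Icc 0 T
  set L := {p : ℝ × ℝ | p.2 ≤ p.1}
  have hL : MeasurableSet L := measurableSet_le measurable_snd measurable_fst
  have hupper : ∫ p in S \ L, F p = ∫ p in S ∩ L, F p := by
    rw [Measure.volume_eq_prod, ← Measure.measurePreserving_swap.setIntegral_preimage_emb
      MeasurableEquiv.prodComm.measurableEmbedding F (S ∩ L)]
    simp_rw [hsymm]
    refine setIntegral_congr_set (eventuallyEq_set.2 ?_)
    filter_upwards [measure_eq_zero_iff_ae_notMem.1 volume_diagonal_real] with ⟨t, s⟩ hp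
    simp only [S, L, Set.mem_sdiff, mem_inter_iff, mem_preimage, mem_prod, Prod.fst_swap,
      Prod.snd_swap, mem_ofPred_eq, not_le, mem_diagonal_iff] at hp ⊢
    exact ⟨fun ⟨⟨ht, hs⟩, hst⟩ => ⟨⟨hs, ht⟩, hst.le⟩,
      fun ⟨⟨hs, ht⟩, hts⟩ => ⟨⟨ht, hs⟩, lt_of_le_of_ne hts hp⟩⟩
  have hlower : ∫ p in S ∩ L, F p = ∫ t in 0..T, ∫ s in 0..t, F (t, s) := by
    rw [← setIntegral_indicator hL, Measure.volume_eq_prod, setIntegral_prod _ (hF.indicator hL),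
      intervalIntegral.integral_of_le hT, ← integral_Icc_eq_integral_Ioc]
    refine setIntegral_congr_fun measurableSet_Icc fun t ht => ?_
    have hIic : Icc 0 T ∩ Iic t = Icc 0 t :=
      Set.ext fun s => ⟨fun h => ⟨h.1.1, h.2⟩, fun h => ⟨⟨h.1, h.2.trans ht.2⟩, h.2⟩⟩
    rw [intervalIntegral.integral_of_le ht.1, ← integral_Icc_eq_integral_Ioc, ← hIic,
      ← setIntegral_indicator measurableSet_Iic]
    rfl
  rw [← integral_inter_add_sdiff hL hF, hupper, hlower]
  ring

theorem integral_indicator_Icc_mul_indicator_Icc (σ t s : ℝ) :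
    ∫ u, (Icc (t - σ) t).indicator 1 u * (Icc (s - σ) s).indicator 1 u = max (σ - |t - s|) 0 := by
  have h : ∀ u, (Icc (t - σ) t).indicator (1 : ℝ → ℝ) u * (Icc (s - σ) s).indicator 1 u =
      (Icc (t - σ) t ∩ Icc (s - σ) s).indicator 1 u := by
    intro u; rw [inter_indicator_one]; rfl
  simp_rw [h, Icc_inter_Icc]
  rw [integral_indicator_one measurableSet_Icc, Real.volume_real_Icc, max_sub_sub_right,
    ← abs_sub_comm, ← max_sub_min_eq_abs]
  congr 1
  linarith [min_add_max t s]

theorem measurable_indicator_Icc_sub (σ : ℝ) :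
    Measurable fun q : ℝ × ℝ => (Icc (q.1 - σ) q.1).indicator (1 : ℝ → ℝ) q.2 :=
  measurable_one.indicator ((measurableSet_le (by fun_prop) measurable_snd).inter
    (measurableSet_le measurable_snd measurable_fst))

theorem taylor_integral_remainder_one_of_hasDerivAt {g g' g'' : ℝ → ℝ} {x b : ℝ} (hxb : x ≤ b)
    (hg : ∀ y ∈ Icc x b, HasDerivAt g (g' y) y) (hg' : ∀ y ∈ Icc x b, HasDerivAt g' (g'' y) y)
    (hg'' : IntervalIntegrable g'' volume x b) :
    g x = g b - (b - x) * g' b + ∫ σ in x..b, (σ - x) * g'' σ := by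
  rw [← uIcc_of_le hxb] at hg hg'
  have hibp := intervalIntegral.integral_mul_deriv_eq_deriv_mul
    (fun σ _ => (hasDerivAt_id σ).sub_const x) hg' intervalIntegrable_const hg''
  have hftc : ∫ σ in x..b, g' σ = g b - g x :=
    intervalIntegral.integral_eq_sub_of_hasDerivAt hg
      (ContinuousOn.intervalIntegrable fun y hy => (hg' y hy).continuousAt.continuousWithinAt)
  simp only [id, sub_self, zero_mul, one_mul, hftc] at hibp
  linarith

theorem setIntegral_Icc_mul_max_sub {h : ℝ → ℝ} {x T : ℝ} (hx : x ∈ Icc 0 T) :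
    ∫ σ in Icc 0 T, h σ * max (σ - x) 0 = ∫ σ in x..T, (σ - x) * h σ := by
  rw [setIntegral_eq_of_subset_of_forall_sdiff_eq_zero measurableSet_Icc
    (Icc_subset_Icc_left hx.1), intervalIntegral.integral_of_le hx.2,
    ← integral_Icc_eq_integral_Ioc]
  · refine setIntegral_congr_fun measurableSet_Icc fun σ hσ => ?_
    rw [max_eq_left (sub_nonneg.2 hσ.1), mul_comm]
  · intro σ hσ
    have : σ < x := by by_contra! h; exact hσ.2 ⟨h, hσ.1.2⟩
    rw [max_eq_right (by linarith), mul_zero]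

theorem sub_mem_Icc_neg {T t s : ℝ} (ht : t ∈ Icc 0 T) (hs : s ∈ Icc 0 T) : t - s ∈ Icc (-T) T :=
  ⟨by linarith [ht.1, hs.2], by linarith [ht.2, hs.1]⟩

noncomputable def kernelForm (T : ℝ) (K ψ : ℝ → ℝ) : ℝ :=
  ∫ p in Icc 0 T ×ˢ Icc 0 T, K (p.1 - p.2) * (ψ p.1 * ψ p.2)

namespace kernelForm

variable {T : ℝ} {ψ : ℝ → ℝ}

theorem integrableOn {K : ℝ → ℝ} (hK : ContinuousOn K (Icc (-T) T)) (hψ : Continuous ψ) :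
    IntegrableOn (fun p : ℝ × ℝ => K (p.1 - p.2) * (ψ p.1 * ψ p.2)) (Icc 0 T ×ˢ Icc 0 T) := by
  refine ContinuousOn.integrableOn_compact (isCompact_Icc.prod isCompact_Icc) ?_
  exact (hK.comp (continuousOn_fst.sub continuousOn_snd) fun p hp => sub_mem_Icc_neg hp.1 hp.2).mul
    (by fun_prop)

theorem add {K₁ K₂ : ℝ → ℝ} (hK₁ : ContinuousOn K₁ (Icc (-T) T))
    (hK₂ : ContinuousOn K₂ (Icc (-T) T)) (hψ : Continuous ψ) :
    kernelForm T (fun x => K₁ x + K₂ x) ψ = kernelForm T K₁ ψ + kernelForm T K₂ ψ := by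
  simp_rw [kernelForm, add_mul]
  exact integral_add (integrableOn hK₁ hψ) (integrableOn hK₂ hψ)

theorem const_mul (c : ℝ) (K : ℝ → ℝ) :
    kernelForm T (fun x => c * K x) ψ = c * kernelForm T K ψ := by
  simp_rw [kernelForm, mul_assoc]
  exact integral_const_mul c _

theorem congr {K K' ψ' : ℝ → ℝ} (hK : EqOn K K' (Icc (-T) T)) (hψ : EqOn ψ ψ' (Icc 0 T)) :
    kernelForm T K ψ = kernelForm T K' ψ' := by
  refine setIntegral_congr_fun (measurableSet_Icc.prod measurableSet_Icc) ?_
  rintro ⟨t, s⟩ ⟨ht, hs⟩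
  dsimp only
  rw [hK (sub_mem_Icc_neg ht hs), hψ ht, hψ hs]

theorem continuous_parametric {K : ℝ → ℝ → ℝ} (hK : Continuous (Function.uncurry K))
    (hψ : Continuous ψ) : Continuous fun ε => kernelForm T (K ε) ψ :=
  continuous_parametric_integral_of_continuous (by fun_prop) (isCompact_Icc.prod isCompact_Icc)

theorem const_nonneg {c : ℝ} (hc : 0 ≤ c) : 0 ≤ kernelForm T (fun _ => c) ψ := by
  rw [kernelForm, integral_const_mul, Measure.volume_eq_prod, setIntegral_prod_mul]
  exact mul_nonneg hc (mul_self_nonneg _)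

theorem tent_nonneg (σ : ℝ) (hψ : Continuous ψ) :
    0 ≤ kernelForm T (fun x => max (σ - |x|) 0) ψ := by
  set f : ℝ → ℝ → ℝ := fun t u => (Icc (t - σ) t).indicator 1 u * ψ t
  have hrepr : ∀ p ∈ Icc 0 T ×ˢ Icc 0 T, max (σ - |p.1 - p.2|) 0 * (ψ p.1 * ψ p.2) =
      ∫ u in Icc (-σ) T, f p.1 u * f p.2 u := by
    rintro ⟨t, s⟩ ⟨ht, -⟩
    rw [setIntegral_eq_integral_of_forall_compl_eq_zero, ← integral_indicator_Icc_mul_indicator_Icc,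
      ← integral_mul_const]
    · congr 1 with u
      ring
    · intro u hu
      have : u ∉ Icc (t - σ) t := fun h => hu ⟨by linarith [h.1, ht.1], h.2.trans ht.2⟩
      simp [f, this]
  rw [kernelForm, setIntegral_congr_fun (measurableSet_Icc.prod measurableSet_Icc) hrepr]
  refine integral_integral_nonneg_of_ae ?_ (ae_of_all _ fun u => ?_)
  · obtain ⟨M, hM⟩ := isCompact_Icc.exists_bound_of_continuousOn (hψ.continuousOn (s := Icc 0 T))
    rw [Measure.prod_restrict, ← Measure.volume_eq_prod]
    refine Measure.integrableOn_of_bounded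
      ((isCompact_Icc.prod isCompact_Icc).prod isCompact_Icc).measure_lt_top.ne ?_ (M := M * M) ?_
    · exact (((measurable_indicator_Icc_sub σ).comp (measurable_fst.fst.prodMk measurable_snd)).mul
        (hψ.measurable.comp measurable_fst.fst)).mul
        (((measurable_indicator_Icc_sub σ).comp (measurable_fst.snd.prodMk measurable_snd)).mul
        (hψ.measurable.comp measurable_fst.snd)) |>.aestronglyMeasurable
    · filter_upwards [ae_restrict_mem ((measurableSet_Icc.prod measurableSet_Icc).prod
        measurableSet_Icc)] with q ⟨⟨ht, hs⟩, _⟩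
      have hf : ∀ t ∈ Icc 0 T, ‖f t q.2‖ ≤ M := fun t ht => by
        rw [norm_mul]
        refine (mul_le_of_le_one_left (norm_nonneg _) ?_).trans (hM t ht)
        by_cases h : q.2 ∈ Icc (t - σ) t <;> simp [h]
      simpa only [Function.uncurry, norm_mul] using
        mul_le_mul (hf _ ht) (hf _ hs) (norm_nonneg _) ((norm_nonneg _).trans (hf _ ht))
  · rw [Measure.volume_eq_prod, setIntegral_prod_mul (fun t => f t u) (fun t => f t u)]
    exact mul_self_nonneg _

theorem tent_mixture_nonneg {w : ℝ → ℝ} (hw : ContinuousOn w (Icc 0 T))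
    (hw0 : ∀ σ ∈ Icc 0 T, 0 ≤ w σ) (hψ : Continuous ψ) :
    0 ≤ kernelForm T (fun x => ∫ σ in Icc 0 T, w σ * max (σ - |x|) 0) ψ := by
  simp_rw [kernelForm, ← integral_mul_const, mul_assoc]
  refine integral_integral_nonneg_of_ae ?_ ?_
  · rw [Measure.prod_restrict, ← Measure.volume_eq_prod]
    refine ContinuousOn.integrableOn_compact
      ((isCompact_Icc.prod isCompact_Icc).prod isCompact_Icc) ?_
    exact (hw.comp continuousOn_snd fun q hq => hq.2).mul (by fun_prop)
  · filter_upwards [ae_restrict_mem measurableSet_Icc] with σ hσ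
    simp_rw [integral_const_mul]
    exact mul_nonneg (hw0 σ hσ) (tent_nonneg σ hψ)

theorem comp_abs_nonneg {g g' g'' : ℝ → ℝ}
    (hg : ∀ x ∈ Icc 0 T, HasDerivAt g (g' x) x) (hg' : ∀ x ∈ Icc 0 T, HasDerivAt g' (g'' x) x)
    (hg''c : ContinuousOn g'' (Icc 0 T)) (hgT : 0 ≤ g T) (hg'T : g' T ≤ 0)
    (hg'' : ∀ x ∈ Icc 0 T, 0 ≤ g'' x) (hψ : Continuous ψ) :
    0 ≤ kernelForm T (fun x => g |x|) ψ := by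
  have habs : ∀ x ∈ Icc (-T) T, |x| ∈ Icc 0 T := fun x hx => ⟨abs_nonneg x, abs_le.2 hx⟩
  have hgc : ContinuousOn (fun x => g |x|) (Icc (-T) T) :=
    (HasDerivAt.continuousOn hg).comp continuous_abs.continuousOn habs
  have htent : ContinuousOn (fun x => -g' T * max (T - |x|) 0) (Icc (-T) T) :=
    Continuous.continuousOn (by fun_prop)
  set R : ℝ → ℝ := fun x => g |x| - g T - -g' T * max (T - |x|) 0
  have hR : EqOn R (fun x => ∫ σ in Icc 0 T, g'' σ * max (σ - |x|) 0) (Icc (-T) T) := by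
    intro x hx
    obtain ⟨hx0, hxT⟩ := habs x hx
    show g |x| - g T - -g' T * max (T - |x|) 0 = ∫ σ in Icc 0 T, g'' σ * max (σ - |x|) 0
    rw [setIntegral_Icc_mul_max_sub (habs x hx), taylor_integral_remainder_one_of_hasDerivAt hxT
      (fun y hy => hg y ⟨hx0.trans hy.1, hy.2⟩) (fun y hy => hg' y ⟨hx0.trans hy.1, hy.2⟩)
      ((hg''c.mono (Icc_subset_Icc_left hx0)).intervalIntegrable_of_Icc hxT)]
    rw [max_eq_left (sub_nonneg.2 hxT)]
    ring
  have hsplit : kernelForm T (fun x => g |x|) ψ =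
      kernelForm T (fun x => (g T + -g' T * max (T - |x|) 0) + R x) ψ := by
    congr 1 with x
    ring
  have hRc : ContinuousOn R (Icc (-T) T) := (hgc.sub continuousOn_const).sub htent
  have hquad : ContinuousOn (fun x => g T + -g' T * max (T - |x|) 0) (Icc (-T) T) :=
    continuousOn_const.add htent
  rw [hsplit, add hquad hRc hψ, add continuousOn_const htent hψ, const_mul,
    congr hR (eqOn_refl ψ _)]
  exact add_nonneg (add_nonneg (const_nonneg hgT)
    (mul_nonneg (neg_nonneg.2 hg'T) (tent_nonneg T hψ))) (tent_mixture_nonneg hg''c hg'' hψ)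

theorem comp_abs_add_nonneg {k : ℝ → ℝ} {ε : ℝ} (hε : 0 < ε)
    (hk : ContDiffOn ℝ 2 k (Ioi 0)) (hkT : 0 ≤ k (T + ε)) (hk'T : deriv k (T + ε) ≤ 0)
    (hk'' : ∀ t, 0 < t → 0 ≤ deriv (deriv k) t) (hψ : Continuous ψ) :
    0 ≤ kernelForm T (fun x => k (|x| + ε)) ψ := by
  have hk' : ContDiffOn ℝ 1 (deriv k) (Ioi 0) := hk.deriv_of_isOpen isOpen_Ioi (by norm_num)
  have hd : ∀ x ∈ Ioi (0 : ℝ), HasDerivAt k (deriv k x) x := fun x hx =>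
    ((hk.differentiableOn (by norm_num)).differentiableAt (isOpen_Ioi.mem_nhds hx)).hasDerivAt
  have hd' : ∀ x ∈ Ioi (0 : ℝ), HasDerivAt (deriv k) (deriv (deriv k) x) x := fun x hx =>
    ((hk'.differentiableOn one_ne_zero).differentiableAt (isOpen_Ioi.mem_nhds hx)).hasDerivAt
  have hc'' : ContinuousOn (deriv (deriv k)) (Ioi 0) :=
    (hk'.deriv_of_isOpen isOpen_Ioi (m := 0) (by norm_num)).continuousOn
  have hpos : ∀ x ∈ Icc 0 T, x + ε ∈ Ioi (0 : ℝ) := fun x hx =>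
    show 0 < x + ε by linarith [hx.1]
  exact comp_abs_nonneg (g := fun x => k (x + ε))
    (fun x hx => (hd _ (hpos x hx)).comp_add_const x ε)
    (fun x hx => (hd' _ (hpos x hx)).comp_add_const x ε)
    (hc''.comp (continuous_add_const ε).continuousOn hpos) hkT hk'T
    (fun x hx => hk'' _ (hpos x hx)) hψ

end kernelForm

theorem two_mul_volterra_eq_kernelForm {k ψ : ℝ → ℝ} {T : ℝ} (hT : 0 ≤ T)
    (hk : ContinuousOn k (Icc 0 T)) (hψ : ContinuousOn ψ (Icc 0 T)) :
    2 * ∫ t in (0 : ℝ)..T, ψ t * ∫ s in (0 : ℝ)..t, k (t - s) * ψ s =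
      kernelForm T (fun x => k |x|) ψ := by
  have hkabs : ContinuousOn (fun x => k |x|) (Icc (-T) T) :=
    hk.comp continuous_abs.continuousOn fun x hx => ⟨abs_nonneg x, abs_le.2 hx⟩
  have hF : IntegrableOn (fun p : ℝ × ℝ => k |p.1 - p.2| * (ψ p.1 * ψ p.2)) (Icc 0 T ×ˢ Icc 0 T) :=
    ((hkabs.comp (continuousOn_fst.sub continuousOn_snd) fun p hp => sub_mem_Icc_neg hp.1 hp.2).mul
      ((hψ.comp continuousOn_fst fun p hp => hp.1).mul (hψ.comp continuousOn_snd fun p hp => hp.2))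
      ).integrableOn_compact (isCompact_Icc.prod isCompact_Icc)
  rw [kernelForm, setIntegral_Icc_prod_Icc_eq_two_mul hT hF fun p => by
    simp only [Prod.fst_swap, Prod.snd_swap, abs_sub_comm p.2, mul_comm (ψ p.2)]]
  congr 1
  refine intervalIntegral.integral_congr fun t ht => ?_
  rw [uIcc_of_le hT] at ht
  rw [← intervalIntegral.integral_const_mul]
  refine intervalIntegral.integral_congr fun s hs => ?_
  rw [uIcc_of_le ht.1] at hs
  simp only [abs_of_nonneg (sub_nonneg.2 hs.2)]
  ring

theorem stmt_11 (k : ℝ → ℝ)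
    (hk_cont : ContinuousOn k (Set.Ici (0 : ℝ)))
    (hk_smooth : ContDiffOn ℝ 2 k (Set.Ioi (0 : ℝ)))
    (hk_nonneg : ∀ t : ℝ, 0 < t → 0 ≤ k t)
    (hk_decr : ∀ t : ℝ, 0 < t → deriv k t ≤ 0)
    (hk_convex : ∀ t : ℝ, 0 < t → 0 ≤ deriv (deriv k) t) :
    ∀ T : ℝ, 0 < T → ∀ ψ : ℝ → ℝ, ContinuousOn ψ (Set.Icc 0 T) →
      0 ≤ ∫ t in (0 : ℝ)..T, ψ t * ∫ s in (0 : ℝ)..t, k (t - s) * ψ s := by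
  intro T hT ψ hψ
  set ψ' := IccExtend hT.le ((Icc 0 T).domRestrict ψ)
  have hψ' : Continuous ψ' := hψ.domRestrict.Icc_extend'
  have hψψ' : EqOn ψ ψ' (Icc 0 T) := fun x hx =>
    (IccExtend_of_mem hT.le ((Icc 0 T).domRestrict ψ) hx).symm
  have hform := two_mul_volterra_eq_kernelForm hT.le (hk_cont.mono Icc_subset_Ici_self) hψ
  rw [kernelForm.congr (eqOn_refl _ _) hψψ'] at hform
  have hcont : Continuous fun ε => kernelForm T (fun x => k (|x| + |ε|)) ψ' :=
    kernelForm.continuous_parametric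
      (hk_cont.comp_continuous (by fun_prop) fun q => mem_Ici.2 (by positivity)) hψ'
  have hlim := (hcont.tendsto 0).mono_left (nhdsWithin_le_nhds (s := Ioi 0))
  have h0 := ge_of_tendsto hlim (eventually_mem_nhdsWithin.mono fun ε (hε : 0 < ε) => by
    simpa only [abs_of_pos hε] using kernelForm.comp_abs_add_nonneg hε hk_smooth
      (hk_nonneg _ (by linarith)) (hk_decr _ (by linarith)) hk_convex hψ')
  simp only [abs_zero, add_zero] at h0
  linarith
end

section
/- Under the hypotheses of Theorem 1 with the additional assumption that D is symmetric positive definite and commutes with A, the solution u of the Volterra integrodifferential equation satisfies ‖u(t)‖_D ≤ ‖u₀‖_D + ∫_0^t ‖φ(s)‖_D ds for all t ≥ 0. -/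
/-!
Energy method. Testing the equation against `D u` gives
`d/dt ⟪D u, u⟫ = 2 ⟪D u, φ⟫ - 2 ⟪D u, k ∗ A u⟫`. Because `D` and `A` commute, `D A` is a
positive operator; diagonalising it splits the time integral of the memory term into scalar
integrals that are nonnegative because `k` is of positive type. Cauchy–Schwarz for the `D`-inner
product then gives `‖u t‖_D ^ 2 ≤ ‖u₀‖_D ^ 2 + 2 ∫ ‖φ‖_D ‖u‖_D`, and a Bihari-type comparison
turns this quadratic bound into the linear one.
-/

open scoped RealInnerProductSpace
open MeasureTheory Set Filter

section VolterraConvolution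

variable {E : Type*} [NormedAddCommGroup E] [NormedSpace ℝ E]

noncomputable def volterraConv (k : ℝ → ℝ) (g : ℝ → E) (t : ℝ) : E :=
  ∫ s in (0 : ℝ)..t, k (t - s) • g s

variable {k : ℝ → ℝ} {g : ℝ → E}

lemma intervalIntegrable_of_locallyIntegrableOn_Ici (hk : LocallyIntegrableOn k (Ici 0))
    {T : ℝ} (hT : 0 ≤ T) : IntervalIntegrable k volume 0 T :=
  (intervalIntegrable_iff_integrableOn_Icc_of_le hT).2 <|
    hk.integrableOn_compact_subset Icc_subset_Ici_self isCompact_Icc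

lemma intervalIntegrable_volterraConv_integrand (hk : LocallyIntegrableOn k (Ici 0))
    (hg : Continuous g) {t : ℝ} (ht : 0 ≤ t) :
    IntervalIntegrable (fun s => k (t - s) • g s) volume 0 t := by
  have hk' := (intervalIntegrable_of_locallyIntegrableOn_Ici hk ht).comp_sub_left t
  rw [sub_self, sub_zero] at hk'
  exact hk'.symm.smul_continuousOn hg.continuousOn

lemma ContinuousLinearMap.map_volterraConv {F : Type*} [NormedAddCommGroup F]
    [NormedSpace ℝ F] [CompleteSpace E] [CompleteSpace F] (L : E →L[ℝ] F)
    (hk : LocallyIntegrableOn k (Ici 0)) (hg : Continuous g) {t : ℝ} (ht : 0 ≤ t) :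
    L (volterraConv k g t) = volterraConv k (fun s => L (g s)) t := by
  rw [volterraConv, ← L.intervalIntegral_comp_comm
    (intervalIntegrable_volterraConv_integrand hk hg ht)]
  simp only [map_smul]
  rfl

lemma volterraConv_eq_integral_indicator {T t : ℝ} (ht : t ∈ Icc 0 T) :
    volterraConv k g t =
      ∫ r in (0 : ℝ)..T, {r | r ≤ t}.indicator (fun r => k r • g (t - r)) r := by
  have h := intervalIntegral.integral_comp_sub_left (a := 0) (b := t)
    (fun r => k r • g (t - r)) t
  simp only [sub_self, sub_zero, sub_sub_cancel] at h
  rw [intervalIntegral.integral_indicator ht, volterraConv, h]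

lemma continuousOn_volterraConv (hk : LocallyIntegrableOn k (Ici 0)) (hg : Continuous g)
    (T : ℝ) : ContinuousOn (volterraConv k g) (Icc 0 T) := by
  -- Over the fixed interval `[0, T]` the integrand is continuous in `t` except at `r = t`,
  -- so dominated convergence applies.
  refine ContinuousOn.congr (f := fun t => ∫ r in (0 : ℝ)..T,
    {r | r ≤ t}.indicator (fun r => k r • g (t - r)) r) ?_
    fun t ht => volterraConv_eq_integral_indicator ht
  intro t₀ ht₀
  have hkT := intervalIntegrable_of_locallyIntegrableOn_Ici hk (ht₀.1.trans ht₀.2)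
  obtain ⟨C, hC⟩ := (isCompact_Icc (a := 0) (b := T + 1)).exists_bound_of_continuousOn
    hg.continuousOn
  have hC0 : 0 ≤ C := (norm_nonneg _).trans (hC 0 ⟨le_rfl, by linarith [ht₀.1, ht₀.2]⟩)
  refine ContinuousAt.continuousWithinAt <|
    intervalIntegral.continuousAt_of_dominated_interval (bound := fun r => ‖k r‖ * C) ?_ ?_
      (hkT.norm.mul_const C) ?_
  · refine Eventually.of_forall fun t => ?_
    exact ((hkT.smul_continuousOn (hg.comp (continuous_sub_left t)).continuousOn).def'
      ).aestronglyMeasurable.indicator measurableSet_Iic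
  · filter_upwards [Iio_mem_nhds (show t₀ < T + 1 by linarith [ht₀.2])] with t ht
    refine Eventually.of_forall fun r hr => ?_
    by_cases hrt : r ≤ t
    · rw [indicator_of_mem (s := {r : ℝ | r ≤ t}) hrt, norm_smul]
      have hr' : r ∈ Ioc 0 T := by simpa [uIoc_of_le (ht₀.1.trans ht₀.2)] using hr
      exact mul_le_mul_of_nonneg_left
        (hC _ ⟨by linarith, by linarith [hr'.1, ht.out]⟩) (norm_nonneg _)
    · rw [indicator_of_notMem (s := {r : ℝ | r ≤ t}) hrt, norm_zero]
      positivity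
  · filter_upwards [Measure.ae_ne volume t₀] with r hr _
    rcases hr.lt_or_gt with hlt | hgt
    · refine ((continuous_const (y := k r)).smul
        (hg.comp (continuous_sub_right r))).continuousAt.congr ?_
      filter_upwards [Ioi_mem_nhds hlt] with t ht
      exact (indicator_of_mem (s := {r' : ℝ | r' ≤ t}) ht.out.le
        (fun r => k r • g (t - r))).symm
    · refine (continuousAt_const (y := (0 : E))).congr ?_
      filter_upwards [Iio_mem_nhds hgt] with t ht
      exact (indicator_of_notMem (s := {r' : ℝ | r' ≤ t}) (not_le.2 ht.out)
        (fun r => k r • g (t - r))).symm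

end VolterraConvolution

section Operators

variable {H : Type*} [NormedAddCommGroup H] [InnerProductSpace ℝ H]

lemma LinearMap.IsSymmetric.inner_map_eq_sum_eigenvalues [FiniteDimensional ℝ H]
    {B : H →ₗ[ℝ] H} (hB : B.IsSymmetric) {n : ℕ} (hn : Module.finrank ℝ H = n) (x y : H) :
    ⟪x, B y⟫ = ∑ i, hB.eigenvalues hn i *
      (⟪hB.eigenvectorBasis hn i, x⟫ * ⟪hB.eigenvectorBasis hn i, y⟫) := by
  rw [← (hB.eigenvectorBasis hn).sum_inner_mul_inner]
  refine Finset.sum_congr rfl fun i _ => ?_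
  rw [← OrthonormalBasis.repr_apply_apply, hB.eigenvectorBasis_apply_self_apply,
    OrthonormalBasis.repr_apply_apply, real_inner_comm]
  simp only [RCLike.ofReal_real_eq_id, id_eq]
  ring

/-- For an eigenvector `e` of `D ∘ A` with eigenvalue `μ`, `A (D e) = μ e`, so that
`μ ⟪D e, e⟫ = ⟪A (D e), D e⟫ ≥ 0`. -/
lemma LinearMap.isPositive_comp_of_commute [FiniteDimensional ℝ H] {D A : H →ₗ[ℝ] H}
    (hD : D.IsSymmetric) (hD_pos : ∀ x, x ≠ 0 → 0 < ⟪D x, x⟫) (hA : A.IsPositive)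
    (hDA : ∀ x, D (A x) = A (D x)) : (D ∘ₗ A).IsPositive := by
  have hB : (D ∘ₗ A).IsSymmetric := fun x y => by
    simp only [LinearMap.comp_apply]
    rw [hD, hA.isSymmetric, hDA]
  refine (LinearMap.isPositive_iff _).2 ⟨hB, fun x => ?_⟩
  set e := hB.eigenvectorBasis rfl
  set μ := hB.eigenvalues rfl
  have hμ : ∀ i, 0 ≤ μ i := fun i => by
    have hAD : A (D (e i)) = μ i • e i := by
      rw [← hDA]; exact hB.apply_eigenvectorBasis rfl i
    have h := hA.inner_nonneg_left (D (e i))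
    rw [hAD, real_inner_smul_left, real_inner_comm] at h
    exact nonneg_of_mul_nonneg_left h (hD_pos _ (e.orthonormal.ne_zero i))
  rw [real_inner_comm, hB.inner_map_eq_sum_eigenvalues rfl]
  exact Finset.sum_nonneg fun i _ => mul_nonneg (hμ i) (mul_self_nonneg _)

lemma LinearMap.IsPositive.inner_le_sqrt_mul_sqrt {D : H →ₗ[ℝ] H} (hD : D.IsPositive)
    (x y : H) :
    ⟪D x, y⟫ ≤ √⟪D x, x⟫ * √⟪D y, y⟫ := by
  have hdiscr : discrim ⟪D y, y⟫ (2 * ⟪D x, y⟫) ⟪D x, x⟫ ≤ 0 := by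
    refine discrim_le_zero fun s => ?_
    have h := hD.inner_nonneg_left (x + s • y)
    have hsym : ⟪D y, x⟫ = ⟪D x, y⟫ := by rw [hD.isSymmetric, real_inner_comm]
    simp only [map_add, map_smul, inner_add_left, inner_add_right, real_inner_smul_left,
      real_inner_smul_right, hsym] at h
    linarith
  rw [discrim] at hdiscr
  rw [← Real.sqrt_mul (hD.inner_nonneg_left x)]
  exact (le_abs_self _).trans (Real.abs_le_sqrt (by nlinarith))

lemma LinearMap.IsSymmetric.inner_map_self_sub_eq_integral [FiniteDimensional ℝ H]
    {D : H →ₗ[ℝ] H} (hD : D.IsSymmetric)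
    {u u' : ℝ → H} {a b : ℝ} (hu : ∀ t ∈ uIcc a b, HasDerivAt u (u' t) t)
    (hu' : ContinuousOn u' (uIcc a b)) :
    ⟪D (u b), u b⟫ - ⟪D (u a), u a⟫ = 2 * ∫ t in a..b, ⟪D (u t), u' t⟫ := by
  have hderiv : ∀ t ∈ uIcc a b,
      HasDerivAt (fun t => ⟪D (u t), u t⟫) (2 * ⟪D (u t), u' t⟫) t := by
    intro t ht
    have hDu : HasDerivAt (fun s => D (u s)) (D (u' t)) t :=
      D.toContinuousLinearMap.hasFDerivAt.comp_hasDerivAt t (hu t ht)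
    refine (hDu.inner ℝ (hu t ht)).congr_deriv ?_
    rw [hD, real_inner_comm]
    ring
  have hcont : ContinuousOn (fun t => ⟪D (u t), u' t⟫) (uIcc a b) :=
    (D.continuous_of_finiteDimensional.comp_continuousOn
      fun t ht => (hu t ht).continuousAt.continuousWithinAt).inner hu'
  rw [← intervalIntegral.integral_const_mul,
    intervalIntegral.integral_eq_sub_of_hasDerivAt hderiv
      (continuousOn_const.mul hcont).intervalIntegrable]

end Operators

/-- A Bihari-type inequality: `R = (v 0 + ε) ^ 2 + 2 ∫ a v` dominates `v ^ 2` and satisfies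
`(√R)' = a v / √R ≤ a`. -/
lemma le_add_integral_of_sq_le_sq_add_integral {v a : ℝ → ℝ} (hv : Continuous v)
    (ha : Continuous a) (ha0 : ∀ t, 0 ≤ a t) (hv0 : 0 ≤ v 0) {T : ℝ} (hT : 0 ≤ T)
    (h : ∀ t ∈ Icc 0 T, v t ^ 2 ≤ v 0 ^ 2 + 2 * ∫ s in (0 : ℝ)..t, a s * v s) :
    v T ≤ v 0 + ∫ s in (0 : ℝ)..T, a s := by
  refine le_of_forall_pos_le_add fun ε hε => ?_
  set R : ℝ → ℝ := fun t => (v 0 + ε) ^ 2 + 2 * ∫ s in (0 : ℝ)..t, a s * v s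
  have hR : ∀ t, HasDerivAt R (2 * (a t * v t)) t := fun t =>
    (((ha.mul hv).integral_hasStrictDerivAt 0 t).hasDerivAt.const_mul 2).const_add _
  have hvR : ∀ t ∈ Icc 0 T, v t ^ 2 + ε * (2 * v 0 + ε) ≤ R t := fun t ht => by
    linarith [h t ht]
  have hRpos : ∀ t ∈ Icc 0 T, 0 < R t := fun t ht => by
    nlinarith [hvR t ht, sq_nonneg (v t)]
  have hvle : ∀ t ∈ Icc 0 T, v t ≤ √(R t) := fun t ht =>
    (le_abs_self _).trans (Real.abs_le_sqrt (by nlinarith [hvR t ht]))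
  have hanti : AntitoneOn (fun t => √(R t) - ∫ s in (0 : ℝ)..t, a s) (Icc 0 T) := by
    refine antitoneOn_of_hasDerivWithinAt_nonpos (convex_Icc 0 T)
      (f' := fun t => 2 * (a t * v t) / (2 * √(R t)) - a t) ?_ ?_ ?_
    · exact ((continuous_iff_continuousAt.2 fun t => (hR t).continuousAt).sqrt.sub
        (intervalIntegral.continuous_primitive (fun _ _ => ha.intervalIntegrable _ _)
          0)).continuousOn
    · intro t ht
      rw [interior_Icc] at ht
      exact (((hR t).sqrt (hRpos t (Ioo_subset_Icc_self ht)).ne').sub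
        (ha.integral_hasStrictDerivAt 0 t).hasDerivAt).hasDerivWithinAt
    · intro t ht
      rw [interior_Icc] at ht
      have hsqrt := Real.sqrt_pos.2 (hRpos t (Ioo_subset_Icc_self ht))
      rw [sub_nonpos, mul_div_mul_left _ _ two_ne_zero, div_le_iff₀ hsqrt]
      exact mul_le_mul_of_nonneg_left (hvle t (Ioo_subset_Icc_self ht)) (ha0 t)
  have hG := hanti ⟨le_rfl, hT⟩ ⟨hT, le_rfl⟩ hT
  simp only [R, intervalIntegral.integral_same, mul_zero, add_zero, sub_zero,
    Real.sqrt_sq (by linarith : 0 ≤ v 0 + ε)] at hG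
  linarith [hvle T ⟨hT, le_rfl⟩]

def IsPositiveType (k : ℝ → ℝ) : Prop :=
  ∀ T : ℝ, 0 < T → ∀ ψ : ℝ → ℝ, ContinuousOn ψ (Set.Icc 0 T) →
    0 ≤ ∫ t in (0 : ℝ)..T, ψ t * ∫ s in (0 : ℝ)..t, k (t - s) * ψ s

section Memory

variable {H : Type*} [NormedAddCommGroup H] [InnerProductSpace ℝ H] [FiniteDimensional ℝ H]

/-- Diagonalising `B` reduces the claim to the scalar positivity of `k`, one eigendirection at a
time. -/
lemma integral_inner_map_volterraConv_nonneg {B : H →ₗ[ℝ] H} (hB : B.IsPositive) {k : ℝ → ℝ}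
    (hk_int : LocallyIntegrableOn k (Ici 0)) (hk_pos : IsPositiveType k) {u : ℝ → H}
    (hu : Continuous u) {T : ℝ} (hT : 0 < T) :
    0 ≤ ∫ t in (0 : ℝ)..T, ⟪u t, volterraConv k (fun s => B (u s)) t⟫ := by
  set e := hB.isSymmetric.eigenvectorBasis rfl
  set ψ : Fin (Module.finrank ℝ H) → ℝ → ℝ := fun i t => ⟪e i, u t⟫
  have hψ : ∀ i, Continuous (ψ i) := fun i => continuous_const.inner hu
  have hdiag : ∀ t ∈ uIcc 0 T, ⟪u t, volterraConv k (fun s => B (u s)) t⟫ =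
      ∑ i, hB.isSymmetric.eigenvalues rfl i * (ψ i t * volterraConv k (ψ i) t) := by
    intro t ht
    rw [uIcc_of_le hT.le] at ht
    have hBw := B.toContinuousLinearMap.map_volterraConv hk_int hu ht.1
    have hψw := fun i => (innerSL ℝ (e i)).map_volterraConv hk_int hu ht.1
    simp only [LinearMap.coe_toContinuousLinearMap', innerSL_apply_apply] at hBw hψw
    rw [← hBw, hB.isSymmetric.inner_map_eq_sum_eigenvalues rfl]
    exact Finset.sum_congr rfl fun i _ => congrArg _ (congrArg _ (hψw i))
  have hterm : ∀ i, ContinuousOn (fun t => ψ i t * volterraConv k (ψ i) t) (uIcc 0 T) := by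
    intro i
    rw [uIcc_of_le hT.le]
    exact (hψ i).continuousOn.mul (continuousOn_volterraConv hk_int (hψ i) T)
  rw [intervalIntegral.integral_congr hdiag, intervalIntegral.integral_finsetSum
    fun i _ => ((hterm i).intervalIntegrable).const_mul _]
  refine Finset.sum_nonneg fun i _ => ?_
  rw [intervalIntegral.integral_const_mul]
  exact mul_nonneg (hB.nonneg_eigenvalues rfl i) (hk_pos T hT (ψ i) (hψ i).continuousOn)

lemma volterra_energy_le {A D : H →ₗ[ℝ] H} (hD : D.IsPositive) (hDA : (D ∘ₗ A).IsPositive)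
    {k : ℝ → ℝ} (hk_int : LocallyIntegrableOn k (Ici 0)) (hk_pos : IsPositiveType k)
    {u φ : ℝ → H} (hφ : Continuous φ) (hu_cont : Continuous u)
    (hu : ∀ t, 0 ≤ t → HasDerivAt u (φ t - volterraConv k (fun s => A (u s)) t) t)
    {t : ℝ} (ht : 0 ≤ t) :
    ⟪D (u t), u t⟫ ≤
      ⟪D (u 0), u 0⟫ + 2 * ∫ s in (0 : ℝ)..t, √⟪D (φ s), φ s⟫ * √⟪D (u s), u s⟫ := by
  rcases ht.eq_or_lt with rfl | ht
  · simp
  set c := volterraConv k (fun s => A (u s))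
  have hDu : Continuous fun s => D (u s) := D.continuous_of_finiteDimensional.comp hu_cont
  have hc : ContinuousOn c (uIcc 0 t) := by
    rw [uIcc_of_le ht.le]
    exact continuousOn_volterraConv hk_int (A.continuous_of_finiteDimensional.comp hu_cont) t
  have hmemory : 0 ≤ ∫ s in (0 : ℝ)..t, ⟪D (u s), c s⟫ := by
    refine (integral_inner_map_volterraConv_nonneg hDA hk_int hk_pos hu_cont ht).trans_eq
      (intervalIntegral.integral_congr fun s hs => ?_)
    rw [uIcc_of_le ht.le] at hs
    have h := D.toContinuousLinearMap.map_volterraConv hk_int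
      (A.continuous_of_finiteDimensional.comp hu_cont) hs.1
    simp only [LinearMap.coe_toContinuousLinearMap'] at h
    rw [hD.isSymmetric]
    exact congrArg (inner ℝ (u s)) h.symm
  have hforcing : ∫ s in (0 : ℝ)..t, ⟪D (u s), φ s⟫ ≤
      ∫ s in (0 : ℝ)..t, √⟪D (φ s), φ s⟫ * √⟪D (u s), u s⟫ := by
    have hDφ : Continuous fun s => D (φ s) := D.continuous_of_finiteDimensional.comp hφ
    refine intervalIntegral.integral_mono_on ht.le ((hDu.inner hφ).intervalIntegrable _ _)
      (((hDφ.inner hφ).sqrt.mul (hDu.inner hu_cont).sqrt).intervalIntegrable _ _) fun s _ => ?_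
    rw [hD.isSymmetric, real_inner_comm]
    exact hD.inner_le_sqrt_mul_sqrt (φ s) (u s)
  have henergy := hD.isSymmetric.inner_map_self_sub_eq_integral
    (fun s hs => hu s (by rw [uIcc_of_le ht.le] at hs; exact hs.1)) (hφ.continuousOn.sub hc)
  simp only [inner_sub_right] at henergy
  rw [intervalIntegral.integral_sub ((hDu.inner hφ).intervalIntegrable _ _)
    ((hDu.continuousOn.inner hc).intervalIntegrable)] at henergy
  linarith

end Memory

theorem stmt_13 {H : Type*} [NormedAddCommGroup H] [InnerProductSpace ℝ H]
    [FiniteDimensional ℝ H]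
    (A D : H →ₗ[ℝ] H) (ν : ℝ) (hν : 0 < ν)
    (hA_sym : ∀ x y : H, ⟪A x, y⟫ = ⟪x, A y⟫)
    (hA_pos : ∀ x : H, ν * ‖x‖ ^ 2 ≤ ⟪A x, x⟫)
    (hD_sym : ∀ x y : H, ⟪D x, y⟫ = ⟪x, D y⟫)
    (hD_pos : ∀ x : H, x ≠ 0 → 0 < ⟪D x, x⟫)
    (hDA_comm : ∀ x : H, D (A x) = A (D x))
    (k : ℝ → ℝ)
    (hk_int : MeasureTheory.LocallyIntegrableOn k (Set.Ici (0 : ℝ)))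
    (hk_pos : ∀ T : ℝ, 0 < T → ∀ ψ : ℝ → ℝ, ContinuousOn ψ (Set.Icc 0 T) →
      0 ≤ ∫ t in (0 : ℝ)..T, ψ t * ∫ s in (0 : ℝ)..t, k (t - s) * ψ s)
    (u φ : ℝ → H) (u₀ : H) (hφ : Continuous φ) (hu_cont : Continuous u)
    (hu : ∀ t, 0 ≤ t →
      HasDerivAt u (φ t - ∫ s in (0 : ℝ)..t, k (t - s) • A (u s)) t)
    (hu0 : u 0 = u₀) :
    ∀ t, 0 ≤ t →
      Real.sqrt ⟪D (u t), u t⟫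
        ≤ Real.sqrt ⟪D u₀, u₀⟫ + ∫ s in (0 : ℝ)..t, Real.sqrt ⟪D (φ s), φ s⟫ := by
  intro T hT
  have hD : D.IsPositive := (D.isPositive_iff).2 ⟨hD_sym, fun x => by
    rcases eq_or_ne x 0 with rfl | hx
    · simp
    · exact (hD_pos x hx).le⟩
  have hA : A.IsPositive := (A.isPositive_iff).2
    ⟨hA_sym, fun x => (by positivity : (0 : ℝ) ≤ ν * ‖x‖ ^ 2).trans (hA_pos x)⟩
  have hDA := LinearMap.isPositive_comp_of_commute hD_sym hD_pos hA hDA_comm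
  have hDcont : Continuous D := D.continuous_of_finiteDimensional
  set v := fun t => √⟪D (u t), u t⟫
  set a := fun t => √⟪D (φ t), φ t⟫
  have hv : Continuous v := ((hDcont.comp hu_cont).inner hu_cont).sqrt
  have ha : Continuous a := ((hDcont.comp hφ).inner hφ).sqrt
  have hsq : ∀ t ∈ Icc 0 T, v t ^ 2 ≤ v 0 ^ 2 + 2 * ∫ s in (0 : ℝ)..t, a s * v s :=
    fun t ht => by
      simp only [v, a, Real.sq_sqrt (hD.inner_nonneg_left _)]
      exact volterra_energy_le hD hDA hk_int hk_pos hφ hu_cont hu ht.1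
  simpa [v, a, hu0] using le_add_integral_of_sq_le_sq_add_integral hv ha
    (fun t => Real.sqrt_nonneg _) (Real.sqrt_nonneg _) hT hsq
end
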